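/- arXiv:2510.12512 — 2 statements merged into one kernel-verified Lean document; each statement's English description precedes it below -/
import Mathlib

section
/- Let 0 < μ < L be reals. Let n ≥ 1, let m ∈ ℝ[z] be a monic polynomial of degree n, and let d ∈ ℝ[z] be a polynomial with deg d < n. Let ρ > 0 and suppose that for every λ ∈ [μ, L], every complex root of m(z) − λ·d(z) has modulus at most ρ. Then for every k ∈ {1, …, n}, the coefficient d_{n−k} of z^{n−k} in d satisfies (L − μ) · |d_{n−k}| ≤ 2 · binom(n, k) · ρ^k. -/
/-!
At each endpoint `λ ∈ {μ, L}` the polynomial `m - λ d` is monic of degree `n` with all complex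
roots in the disc of radius `ρ`, so by Vieta its coefficient of `z^(n-k)` is at most
`binom(n,k) ρ^k` in absolute value. Subtracting the two endpoint polynomials leaves
`(L - μ) d`, and the triangle inequality gives the factor `2`.
-/

open Polynomial

namespace Polynomial

theorem degree_C_mul_le {R : Type*} [Semiring R] (a : R) (p : R[X]) :
    (C a * p).degree ≤ p.degree := by
  simpa only [smul_eq_C_mul] using degree_smul_le a p

section perturbation

variable {R : Type*} [Ring R] {m d : R[X]}

theorem Monic.sub_C_mul_of_degree_lt (hm : m.Monic) (hd : d.degree < m.degree) (a : R) :
    (m - C a * d).Monic :=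
  hm.sub_of_left ((degree_C_mul_le a d).trans_lt hd)

theorem natDegree_sub_C_mul_of_degree_lt (hd : d.degree < m.degree) (a : R) :
    (m - C a * d).natDegree = m.natDegree :=
  natDegree_eq_of_degree_eq (degree_sub_eq_left_of_degree_lt ((degree_C_mul_le a d).trans_lt hd))

end perturbation

theorem abs_coeff_le_of_complex_roots_le {p : ℝ[X]} (hp : p.Monic) {ρ : ℝ}
    (hroots : ∀ z : ℂ, (p.map (algebraMap ℝ ℂ)).IsRoot z → ‖z‖ ≤ ρ) (i : ℕ) :
    |p.coeff i| ≤ ρ ^ (p.natDegree - i) * p.natDegree.choose i := by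
  have h := coeff_le_of_roots_le i hp (IsAlgClosed.splits _)
    fun z hz => hroots z (isRoot_of_mem_roots hz)
  rwa [coeff_map, Complex.coe_algebraMap, Complex.norm_real, Real.norm_eq_abs] at h

end Polynomial

theorem filter_coefficient_bound_general
    (μ L : ℝ) (hμL : μ < L)
    (n : ℕ)
    (m : Polynomial ℝ) (hm : m.Monic) (hmdeg : m.natDegree = n)
    (d : Polynomial ℝ) (hd : d.degree < (n : WithBot ℕ))
    (ρ : ℝ)
    (hstab : ∀ lam ∈ Set.Icc μ L, ∀ z : ℂ,
      ((m - C lam * d).map (algebraMap ℝ ℂ)).IsRoot z → ‖z‖ ≤ ρ) :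
    ∀ k, 1 ≤ k → k ≤ n →
      (L - μ) * |d.coeff (n - k)| ≤ 2 * (n.choose k : ℝ) * ρ ^ k := by
  intro k _ hkn
  have hdm : d.degree < m.degree := by rwa [degree_eq_natDegree hm.ne_zero, hmdeg]
  have endpoint_bound : ∀ lam ∈ Set.Icc μ L,
      |(m - C lam * d).coeff (n - k)| ≤ ρ ^ k * n.choose k := fun lam hlam => by
    have h := abs_coeff_le_of_complex_roots_le (hm.sub_C_mul_of_degree_lt hdm lam)
      (hstab lam hlam) (n - k)
    rwa [natDegree_sub_C_mul_of_degree_lt hdm, hmdeg, Nat.sub_sub_self hkn,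
      Nat.choose_symm hkn] at h
  have hdiff : (L - μ) * d.coeff (n - k)
      = (m - C μ * d).coeff (n - k) - (m - C L * d).coeff (n - k) := by
    simp only [coeff_sub, coeff_C_mul]
    ring
  calc (L - μ) * |d.coeff (n - k)| = |(L - μ) * d.coeff (n - k)| := by
        rw [abs_mul, abs_of_pos (sub_pos.mpr hμL)]
    _ ≤ |(m - C μ * d).coeff (n - k)| + |(m - C L * d).coeff (n - k)| := by
        rw [hdiff]; exact abs_sub _ _
    _ ≤ ρ ^ k * n.choose k + ρ ^ k * n.choose k :=
        add_le_add (endpoint_bound μ ⟨le_rfl, hμL.le⟩) (endpoint_bound L ⟨hμL.le, le_rfl⟩)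
    _ = 2 * (n.choose k : ℝ) * ρ ^ k := by ring

/-- **Bound on the filter-numerator coefficients.**
Let `0 < μ < L`. Let `m` be a monic real polynomial of degree `n ≥ 1` and `d` a
real polynomial with `deg d < n`. If every complex root of `m - λ·d` has modulus
at most `ρ` for all `λ ∈ [μ, L]`, then for every `k ∈ {1, …, n}` the coefficient
of `z^(n-k)` in `d` satisfies `(L-μ)·|d_{n-k}| ≤ 2·binom(n,k)·ρ^k`. -/
theorem filter_coefficient_bound
    (μ L : ℝ) (hμ : 0 < μ) (hμL : μ < L)
    (n : ℕ) (hn : 1 ≤ n)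
    (m : Polynomial ℝ) (hm : m.Monic) (hmdeg : m.natDegree = n)
    (d : Polynomial ℝ) (hd : d.degree < (n : WithBot ℕ))
    (ρ : ℝ) (hρ : 0 < ρ)
    (hstab : ∀ lam ∈ Set.Icc μ L, ∀ z : ℂ,
      ((m - C lam * d).map (algebraMap ℝ ℂ)).IsRoot z → ‖z‖ ≤ ρ) :
    ∀ k, 1 ≤ k → k ≤ n →
      (L - μ) * |d.coeff (n - k)| ≤ 2 * (n.choose k : ℝ) * ρ ^ k :=
  filter_coefficient_bound_general μ L hμL n m hm hmdeg d hd ρ hstab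
end

section
/- Let A be a d×d real symmetric matrix all of whose eigenvalues lie in [μ, L] with 0 < μ < L (so A is invertible). Let n ≥ 1, let m ∈ ℝ[z] be a monic polynomial of degree n with coefficients m_0, …, m_{n−1}, and let d ∈ ℝ[z] be a polynomial of degree < n with coefficients d_0, …, d_{n−1}. Let b, x : ℕ → ℝ^d be sequences such that for all k ∈ ℕ: (i) b_{k+n} + Σ_{i=0}^{n−1} m_i b_{k+i} = 0, and (ii) x_{k+n} + Σ_{i=0}^{n−1} m_i x_{k+i} = Σ_{i=0}^{n−1} d_i (A x_{k+i} + b_{k+i}). Let ρ ∈ (0, 1) be such that for every λ ∈ [μ, L], every complex root of m(z) − λ·d(z) has modulus at most ρ. Then for every real r > ρ, ‖x_k − x*_k‖ / r^k → 0 as k → ∞, where x*_k = −A⁻¹ b_k; in particular the algorithm asymptotically tracks the minimizer of f_k(x) = ½xᵀAx + b_kᵀx. -/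
/-!
Write `σ` for the shift of sequences. The tracking error `e_k = x_k + A⁻¹ b_k` satisfies
`m(σ) e = d(σ) (A e)`, because `m(σ)` kills `b` and commutes with `A⁻¹`. In an orthonormal
eigenbasis of `A` each coordinate of `e` therefore satisfies the scalar recurrence
`(m - λ d)(σ) y = 0`, with `λ ∈ [μ, L]` an eigenvalue. Over `ℂ`, `m - λ d` is a product of factors
`X - z` with `|z| ≤ ρ`, and peeling them off one at a time turns `(σ - z) u = O(k ^ j ρ ^ k)` into
`u = O(k ^ (j + 1) ρ ^ k)`. So every coordinate, hence `e`, is `O(k ^ n ρ ^ k) = o(r ^ k)`.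
-/

open Polynomial Filter Matrix Asymptotics Finset

lemma Polynomial.degree_lt_natDegree_add_one {R : Type*} [Semiring R] (p : R[X]) :
    p.degree < ↑(p.natDegree + 1) :=
  degree_le_natDegree.trans_lt (by exact_mod_cast p.natDegree.lt_succ_self)

def seqShift (R M : Type*) [Semiring R] [AddCommMonoid M] [Module R M] : Module.End R (ℕ → M) :=
  LinearMap.funLeft R M Nat.succ

section Shift

variable {R M N : Type*} [CommSemiring R] [AddCommMonoid M] [Module R M]
  [AddCommMonoid N] [Module R N]

lemma seqShift_pow_apply (i : ℕ) (u : ℕ → M) (k : ℕ) :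
    (seqShift R M ^ i) u k = u (k + i) := by
  induction i generalizing u with
  | zero => rfl
  | succ i ih => rw [pow_succ, Module.End.mul_apply, ih]; rfl

lemma aeval_seqShift_apply {p : R[X]} {n : ℕ} (hp : p.degree < n) (u : ℕ → M) (k : ℕ) :
    aeval (seqShift R M) p u k = ∑ i ∈ range n, p.coeff i • u (k + i) := by
  rcases eq_or_ne p 0 with rfl | hp0
  · simp
  rw [aeval_eq_sum_range' ((natDegree_lt_iff_degree_lt hp0).2 hp)]
  simp [seqShift_pow_apply]

lemma aeval_seqShift_apply_of_monic {p : R[X]} (hp : p.Monic) (u : ℕ → M) (k : ℕ) :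
    aeval (seqShift R M) p u k =
      u (k + p.natDegree) + ∑ i ∈ range p.natDegree, p.coeff i • u (k + i) := by
  rw [aeval_seqShift_apply (degree_lt_natDegree_add_one p), sum_range_succ, hp.coeff_natDegree,
    one_smul, add_comm]

lemma aeval_seqShift_comp (p : R[X]) (f : M →ₗ[R] N) (u : ℕ → M) :
    aeval (seqShift R N) p (f ∘ u) = f ∘ aeval (seqShift R M) p u := by
  ext k
  simp [aeval_seqShift_apply (degree_lt_natDegree_add_one p)]

lemma aeval_seqShift_map {S : Type*} [CommSemiring S] (f : R →+* S) (p : R[X]) (u : ℕ → R) :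
    aeval (seqShift S S) (p.map f) (f ∘ u) = f ∘ aeval (seqShift R R) p u := by
  ext k
  have hdeg := (degree_map_le (p := p) (f := f)).trans_lt (degree_lt_natDegree_add_one p)
  simp [aeval_seqShift_apply hdeg, aeval_seqShift_apply (degree_lt_natDegree_add_one p)]

end Shift

section Tracking

variable {R V : Type*} [CommRing R] [AddCommGroup V] [Module R V] {m d : R[X]}

lemma aeval_seqShift_add_comp_of_rightInverse {f g : V →ₗ[R] V} (hfg : Function.RightInverse g f)
    {x b : ℕ → V} (hb : aeval (seqShift R V) m b = 0)
    (hx : aeval (seqShift R V) m x = aeval (seqShift R V) d (fun k => f (x k) + b k)) :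
    aeval (seqShift R V) m (x + g ∘ b) = aeval (seqShift R V) d (f ∘ (x + g ∘ b)) := by
  have hfe : f ∘ (x + g ∘ b) = fun k => f (x k) + b k := by
    ext k
    simp [hfg (b k)]
  rw [map_add, aeval_seqShift_comp, hb, hx, hfe]
  ext k
  simp

lemma aeval_seqShift_sub_C_mul_comp_eq_zero {f : V →ₗ[R] V} {ℓ : V →ₗ[R] R} {c : R}
    (hℓ : ∀ v, ℓ (f v) = c * ℓ v) {e : ℕ → V}
    (he : aeval (seqShift R V) m e = aeval (seqShift R V) d (f ∘ e)) :
    aeval (seqShift R R) (m - C c * d) (ℓ ∘ e) = 0 := by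
  have hfe : ℓ ∘ (f ∘ e) = c • (ℓ ∘ e) := funext fun k => hℓ (e k)
  rw [map_sub, map_mul, aeval_C, LinearMap.sub_apply, Module.End.mul_apply,
    aeval_seqShift_comp, he, ← aeval_seqShift_comp, hfe, Module.algebraMap_end_apply,
    LinearMap.map_smul, sub_self]

end Tracking

lemma isLittleO_add_one_pow_mul_pow {ρ r : ℝ} (hρ : 0 < ρ) (hr : ρ < r) (n : ℕ) :
    (fun k : ℕ => ((k : ℝ) + 1) ^ n * ρ ^ k) =o[atTop] fun k => r ^ k := by
  have h := (isLittleO_pow_const_mul_const_pow_const_pow_of_norm_lt n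
    (by rwa [Real.norm_of_nonneg hρ.le])).comp_tendsto (tendsto_add_atTop_nat 1)
  have hr' : (fun k : ℕ => r ^ (k + 1)) =O[atTop] fun k => r ^ k := by
    simpa [pow_succ, mul_comm] using (isBigO_refl (fun k : ℕ => r ^ k) atTop).const_mul_left r
  refine ((h.const_mul_left ρ⁻¹).trans_isBigO hr').congr_left fun k => ?_
  simp only [Function.comp_apply]
  push_cast
  field_simp
  ring

section Bounds

variable {𝕜 E : Type*} [NormedField 𝕜] [NormedAddCommGroup E] [NormedSpace 𝕜 E]

lemma norm_le_of_norm_sub_smul_le {ρ C : ℝ} (hρ : 0 < ρ) (hC : 0 ≤ C) {z : 𝕜} (hz : ‖z‖ ≤ ρ)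
    {n : ℕ} {u : ℕ → E} (hu : ∀ k : ℕ, ‖u (k + 1) - z • u k‖ ≤ C * (k + 1) ^ n * ρ ^ k)
    (k : ℕ) : ‖u k‖ ≤ (‖u 0‖ + C / ρ) * (k + 1) ^ (n + 1) * ρ ^ k := by
  set K := ‖u 0‖ + C / ρ
  have hCK : C ≤ K * ρ := by
    rw [← div_le_iff₀ hρ]
    exact le_add_of_nonneg_left (norm_nonneg _)
  induction k with
  | zero => simpa [K] using div_nonneg hC hρ.le
  | succ k ih =>
    calc ‖u (k + 1)‖ ≤ ‖z • u k‖ + ‖u (k + 1) - z • u k‖ := norm_le_insert' _ _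
      _ ≤ ρ * (K * (k + 1) ^ (n + 1) * ρ ^ k) + C * (k + 1) ^ n * ρ ^ k := by
        rw [norm_smul]
        gcongr
        exact hu k
      _ ≤ ρ * (K * (k + 1) ^ (n + 1) * ρ ^ k) + K * ρ * (k + 1) ^ n * ρ ^ k := by gcongr
      _ = K * ((k + 1) ^ n * (k + 2)) * ρ ^ (k + 1) := by ring
      _ ≤ K * (k + 2) ^ (n + 1) * ρ ^ (k + 1) := by
        rw [pow_succ ((k : ℝ) + 2) n]
        gcongr
        linarith
      _ = K * ((k + 1 : ℕ) + 1) ^ (n + 1) * ρ ^ (k + 1) := by push_cast; ring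

variable [IsAlgClosed 𝕜]

lemma exists_norm_le_of_aeval_seqShift_eq_zero {ρ : ℝ} (hρ : 0 < ρ) {p : 𝕜[X]} (hp : p.Monic)
    (hroots : ∀ z, p.IsRoot z → ‖z‖ ≤ ρ) {u : ℕ → E} (hu : aeval (seqShift 𝕜 E) p u = 0) :
    ∃ C, 0 ≤ C ∧ ∀ k : ℕ, ‖u k‖ ≤ C * (k + 1) ^ p.natDegree * ρ ^ k := by
  induction hn : p.natDegree generalizing p u with
  | zero =>
    obtain rfl : p = 1 := hp.natDegree_eq_zero.1 hn
    obtain rfl : u = 0 := by simpa using hu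
    exact ⟨0, le_rfl, by simp⟩
  | succ n ih =>
    obtain ⟨z, hz⟩ := IsAlgClosed.exists_root p <| by
      rw [degree_eq_natDegree hp.ne_zero, hn]; exact_mod_cast n.succ_ne_zero
    obtain ⟨q, rfl⟩ := dvd_iff_isRoot.2 hz
    have hq : q.Monic := (monic_X_sub_C z).of_mul_monic_left hp
    set v := aeval (seqShift 𝕜 E) (X - C z) u
    have hv : aeval (seqShift 𝕜 E) q v = 0 := by
      rwa [← Module.End.mul_apply, ← map_mul, mul_comm]
    obtain ⟨C, hC, hCv⟩ := ih hq (fun w hw => hroots w (by simp [hw.eq_zero])) hv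
      (by rw [(monic_X_sub_C z).natDegree_mul hq, natDegree_X_sub_C] at hn; omega)
    refine ⟨‖u 0‖ + C / ρ, by positivity, norm_le_of_norm_sub_smul_le hρ hC (hroots z hz) ?_⟩
    intro k
    convert hCv k using 2
    simp [v, seqShift]

lemma isLittleO_of_aeval_seqShift_eq_zero {ρ r : ℝ} (hρ : 0 < ρ) (hr : ρ < r) {p : 𝕜[X]}
    (hp : p.Monic) (hroots : ∀ z, p.IsRoot z → ‖z‖ ≤ ρ) {u : ℕ → E}
    (hu : aeval (seqShift 𝕜 E) p u = 0) : u =o[atTop] fun k => r ^ k := by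
  obtain ⟨C, -, hC⟩ := exists_norm_le_of_aeval_seqShift_eq_zero hρ hp hroots hu
  refine (IsBigO.of_bound C (Eventually.of_forall fun k => ?_)).trans_isLittleO
    (isLittleO_add_one_pow_mul_pow hρ hr p.natDegree)
  rw [Real.norm_of_nonneg (by positivity), ← mul_assoc]
  exact hC k

end Bounds

lemma isLittleO_of_aeval_seqShift_eq_zero_of_real {ρ r : ℝ} (hρ : 0 < ρ) (hr : ρ < r) {p : ℝ[X]}
    (hp : p.Monic) (hroots : ∀ z : ℂ, (p.map (algebraMap ℝ ℂ)).IsRoot z → ‖z‖ ≤ ρ) {u : ℕ → ℝ}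
    (hu : aeval (seqShift ℝ ℝ) p u = 0) : u =o[atTop] fun k => r ^ k := by
  have hu' : aeval (seqShift ℂ ℂ) (p.map (algebraMap ℝ ℂ)) ((algebraMap ℝ ℂ) ∘ u) = 0 := by
    rw [aeval_seqShift_map, hu]
    ext
    simp
  simpa using (isLittleO_of_aeval_seqShift_eq_zero hρ hr (hp.map _) hroots hu').norm_left

lemma Matrix.IsHermitian.star_eigenvectorUnitary_mulVec_mulVec_apply {𝕜 ι : Type*} [RCLike 𝕜]
    [Fintype ι] [DecidableEq ι] {A : Matrix ι ι 𝕜} (hA : A.IsHermitian) (v : ι → 𝕜) (j : ι) :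
    (star (hA.eigenvectorUnitary : Matrix ι ι 𝕜) *ᵥ (A *ᵥ v)) j =
      hA.eigenvalues j * (star (hA.eigenvectorUnitary : Matrix ι ι 𝕜) *ᵥ v) j := by
  set U : Matrix ι ι 𝕜 := ↑hA.eigenvectorUnitary
  have h : star U * A = diagonal (RCLike.ofReal ∘ hA.eigenvalues) * star U := by
    rw [← hA.conjStarAlgAut_star_eigenvectorUnitary, Unitary.conjStarAlgAut_star_apply,
      mul_assoc _ U, Unitary.mul_star_self_of_mem hA.eigenvectorUnitary.2, mul_one]
  rw [mulVec_mulVec, h, ← mulVec_mulVec, mulVec_diagonal]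
  rfl

lemma Matrix.isLittleO_of_isLittleO_mulVec {𝕜 ι α F : Type*} [NontriviallyNormedField 𝕜]
    [CompleteSpace 𝕜] [Fintype ι] [DecidableEq ι] [Norm F] {M N : Matrix ι ι 𝕜} (hNM : N * M = 1)
    {l : Filter α} {f : α → ι → 𝕜} {g : α → F} (h : (fun a => M *ᵥ f a) =o[l] g) : f =o[l] g := by
  simpa [mulVec_mulVec, hNM] using
    ((LinearMap.toContinuousLinearMap N.mulVecLin).isBigO_comp _ l).trans_isLittleO h

theorem matrix_tracking_general
    (dim : ℕ) (A : Matrix (Fin dim) (Fin dim) ℝ) (hsymm : A.IsSymm)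
    (μ L : ℝ) (hμ : 0 < μ)
    (heig : ∀ t ∈ spectrum ℝ A, t ∈ Set.Icc μ L)
    (n : ℕ)
    (m : Polynomial ℝ) (hm : m.Monic) (hmdeg : m.natDegree = n)
    (d : Polynomial ℝ) (hd : d.degree < (n : WithBot ℕ))
    (b x : ℕ → Fin dim → ℝ)
    (hb : ∀ k : ℕ, b (k + n) + ∑ i ∈ Finset.range n, m.coeff i • b (k + i) = 0)
    (hx : ∀ k : ℕ, x (k + n) + ∑ i ∈ Finset.range n, m.coeff i • x (k + i) =
      ∑ i ∈ Finset.range n, d.coeff i • (A.mulVec (x (k + i)) + b (k + i)))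
    (ρ : ℝ) (hρ : ρ ∈ Set.Ioo (0 : ℝ) 1)
    (hroots : ∀ lam ∈ Set.Icc μ L, ∀ z : ℂ,
      ((m - C lam * d).map (algebraMap ℝ ℂ)).IsRoot z → ‖z‖ ≤ ρ)
    (r : ℝ) (hr : ρ < r) :
    Tendsto (fun k : ℕ => ‖x k - (-(A⁻¹.mulVec (b k)))‖ / r ^ k) atTop (nhds 0) := by
  have hA : A.IsHermitian := by rwa [IsHermitian, conjTranspose_eq_transpose_of_trivial]
  have hAinv : A * A⁻¹ = 1 := by
    have h0 : (0 : ℝ) ∉ spectrum ℝ A := fun h => (heig 0 h).1.not_gt hμ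
    rw [spectrum.zero_mem_iff, not_not, isUnit_iff_isUnit_det] at h0
    exact mul_nonsing_inv A h0
  have hdm : d.degree < m.degree := by rwa [degree_eq_natDegree hm.ne_zero, hmdeg]
  have hb' : aeval (seqShift ℝ _) m b = 0 := funext fun k => by
    rw [aeval_seqShift_apply_of_monic hm, hmdeg]; exact hb k
  have hx' : aeval (seqShift ℝ _) m x = aeval (seqShift ℝ _) d fun k => A *ᵥ x k + b k :=
    funext fun k => by
      rw [aeval_seqShift_apply_of_monic hm, hmdeg, aeval_seqShift_apply hd]; exact hx k
  set e := x + A⁻¹.mulVecLin ∘ b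
  have he := aeval_seqShift_add_comp_of_rightInverse (f := A.mulVecLin) (g := A⁻¹.mulVecLin)
    (fun v => by simp [mulVec_mulVec, hAinv]) hb' hx'
  set U : Matrix (Fin dim) (Fin dim) ℝ := ↑hA.eigenvectorUnitary
  have hcoord (j : Fin dim) : (fun k => (star U *ᵥ e k) j) =o[atTop] fun k => r ^ k :=
    isLittleO_of_aeval_seqShift_eq_zero_of_real hρ.1 hr
      (hm.sub_of_left (by rw [← smul_eq_C_mul]; exact (degree_smul_le _ _).trans_lt hdm))
      (hroots _ (heig _ (hA.eigenvalues_mem_spectrum_real j)))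
      (aeval_seqShift_sub_C_mul_comp_eq_zero (ℓ := (LinearMap.proj j).comp (star U).mulVecLin)
        (hA.star_eigenvectorUnitary_mulVec_mulVec_apply · j) he)
  have he_o : e =o[atTop] fun k => r ^ k := isLittleO_of_isLittleO_mulVec
    (Unitary.mul_star_self_of_mem hA.eigenvectorUnitary.2) (isLittleO_pi.2 hcoord)
  have hr0 (k : ℕ) : r ^ k ≠ 0 := pow_ne_zero k (hρ.1.trans hr).ne'
  simpa [e, sub_neg_eq_add] using
    (isLittleO_iff_tendsto fun k h => absurd h (hr0 k)).1 (isLittleO_norm_left.2 he_o)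

/-- **Exact asymptotic tracking at rate ρ (Lemma 1 (L1.2) + Lemma 2, sufficiency).**
Let `A` be a `d×d` real symmetric matrix with all eigenvalues in `[μ, L]`,
`0 < μ < L`. Suppose `b` satisfies the model recurrence
`b_{k+n} + Σ m_i b_{k+i} = 0` and the iterates satisfy
`x_{k+n} + Σ m_i x_{k+i} = Σ d_i (A x_{k+i} + b_{k+i})`, where `m` is monic of
degree `n ≥ 1` and `deg d < n`. If `ρ ∈ (0,1)` is such that for every
`λ ∈ [μ, L]` every complex root of `m - λ·d` has modulus at most `ρ`, then
`‖x_k - x*_k‖ / r^k → 0` for every `r > ρ`, where `x*_k = -A⁻¹ b_k`. -/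
theorem matrix_tracking
    (dim : ℕ) (A : Matrix (Fin dim) (Fin dim) ℝ) (hsymm : A.IsSymm)
    (μ L : ℝ) (hμ : 0 < μ) (hμL : μ < L)
    (heig : ∀ t ∈ spectrum ℝ A, t ∈ Set.Icc μ L)
    (n : ℕ) (hn : 1 ≤ n)
    (m : Polynomial ℝ) (hm : m.Monic) (hmdeg : m.natDegree = n)
    (d : Polynomial ℝ) (hd : d.degree < (n : WithBot ℕ))
    (b x : ℕ → Fin dim → ℝ)
    (hb : ∀ k : ℕ, b (k + n) + ∑ i ∈ Finset.range n, m.coeff i • b (k + i) = 0)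
    (hx : ∀ k : ℕ, x (k + n) + ∑ i ∈ Finset.range n, m.coeff i • x (k + i) =
      ∑ i ∈ Finset.range n, d.coeff i • (A.mulVec (x (k + i)) + b (k + i)))
    (ρ : ℝ) (hρ : ρ ∈ Set.Ioo (0 : ℝ) 1)
    (hroots : ∀ lam ∈ Set.Icc μ L, ∀ z : ℂ,
      ((m - C lam * d).map (algebraMap ℝ ℂ)).IsRoot z → ‖z‖ ≤ ρ)
    (r : ℝ) (hr : ρ < r) :
    Tendsto (fun k : ℕ => ‖x k - (-(A⁻¹.mulVec (b k)))‖ / r ^ k) atTop (nhds 0) :=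
  matrix_tracking_general dim A hsymm μ L hμ heig n m hm hmdeg d hd b x hb hx ρ hρ hroots r hr
end
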